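/- arXiv:1607.00979 — 3 statements merged into one kernel-verified Lean document; each statement's English description precedes it below -/
import Mathlib

section
/- Let γ ∈ ℝ and C > 0 be fixed. Then there exists a constant C' > 0 (depending only on γ and C) such that (ab + 1)^γ · exp(−C(b − a)²) ≤ C' (a + 1)^{2γ} for all a, b ≥ 0. -/
/-!
With `s = (b - a)²`, the two quantities `ab + 1` and `(a + 1)²` are comparable up to the factor
`4 (s + 1)` in both directions, so `(ab + 1)^γ ≤ (4 (s + 1))^|γ| (a + 1)^{2γ}` whatever the sign
of `γ`. The polynomial factor `(s + 1)^|γ|` is then absorbed by `exp (-C s)`, via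
`log y ≤ y - 1`.
-/

theorem rpow_le_mul_exp_mul {x g C : ℝ} (hx : 0 < x) (hg : 0 ≤ g) (hC : 0 < C) :
    x ^ g ≤ (g / (C * Real.exp 1)) ^ g * Real.exp (C * x) := by
  rcases hg.eq_or_lt with rfl | hg
  · simpa using Real.one_le_exp (by positivity : 0 ≤ C * x)
  have hCe : 0 < C * Real.exp 1 := by positivity
  rw [Real.rpow_def_of_pos hx, Real.rpow_def_of_pos (div_pos hg hCe), ← Real.exp_add,
    Real.exp_le_exp, Real.log_div hg.ne' hCe.ne', Real.log_mul hC.ne' (Real.exp_pos 1).ne',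
    Real.log_exp]
  have hlog := Real.log_le_sub_one_of_pos (by positivity : 0 < C * x / g)
  rw [Real.log_div (by positivity) hg.ne', Real.log_mul hC.ne' hx.ne'] at hlog
  have hmul := mul_le_mul_of_nonneg_left hlog hg.le
  rw [show g * (C * x / g - 1) = C * x - g by field_simp] at hmul
  linarith

theorem rpow_le_rpow_abs_mul_rpow {x y K : ℝ} (γ : ℝ) (hx : 0 < x) (hy : 0 < y)
    (hxy : x ≤ K * y) (hyx : y ≤ K * x) : x ^ γ ≤ K ^ |γ| * y ^ γ := by
  have hK : 0 < K := pos_of_mul_pos_left (hy.trans_le hyx) hx.le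
  rcases le_or_gt 0 γ with hγ | hγ
  · rw [abs_of_nonneg hγ, ← Real.mul_rpow hK.le hy.le]
    exact Real.rpow_le_rpow hx.le hxy hγ
  · rw [abs_of_neg hγ, Real.rpow_neg hK.le, ← div_eq_inv_mul, ← Real.div_rpow hy.le hK.le]
    exact Real.rpow_le_rpow_of_nonpos (by positivity) ((div_le_iff₀' hK).2 hyx) hγ.le

theorem mul_add_one_le_four_mul (a b : ℝ) (ha : 0 ≤ a) (hb : 0 ≤ b) :
    a * b + 1 ≤ 4 * ((b - a) ^ 2 + 1) * (a + 1) ^ 2 := by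
  nlinarith [sq_nonneg (b - a), sq_nonneg a, mul_nonneg ha hb,
    mul_nonneg (mul_nonneg ha hb) (sq_nonneg (b - a)), sq_nonneg (a * (b - a))]

theorem add_one_sq_le_four_mul (a b : ℝ) (ha : 0 ≤ a) (hb : 0 ≤ b) :
    (a + 1) ^ 2 ≤ 4 * ((b - a) ^ 2 + 1) * (a * b + 1) := by
  nlinarith [sq_nonneg (b - a), mul_nonneg ha hb,
    mul_nonneg (mul_nonneg ha hb) (sq_nonneg (b - a)), sq_nonneg (2 * b - a)]

/-- For fixed `γ ∈ ℝ` and `C > 0`, there exists `C' > 0` such that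
`(ab + 1)^γ · exp(−C(b − a)²) ≤ C' (a + 1)^{2γ}` for all `a, b ≥ 0`. -/
theorem stmt0 (γ C : ℝ) (hC : 0 < C) :
    ∃ C' : ℝ, 0 < C' ∧ ∀ a b : ℝ, 0 ≤ a → 0 ≤ b →
      (a * b + 1) ^ γ * Real.exp (-C * (b - a) ^ 2) ≤ C' * (a + 1) ^ (2 * γ) := by
  set M := (|γ| / (C * Real.exp 1)) ^ |γ|
  have hM : 0 < M := by
    rcases (abs_nonneg γ).eq_or_lt with h | h
    · simp [M, ← h]
    · positivity
  refine ⟨4 ^ |γ| * M * Real.exp C, by positivity, fun a b ha hb => ?_⟩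
  set s := (b - a) ^ 2
  have hs : 0 < s + 1 := by positivity
  have hcomp := rpow_le_rpow_abs_mul_rpow γ (by positivity) (by positivity)
    (mul_add_one_le_four_mul a b ha hb) (add_one_sq_le_four_mul a b ha hb)
  rw [Real.mul_rpow (by norm_num) hs.le, ← Real.rpow_natCast_mul (by positivity)] at hcomp
  calc (a * b + 1) ^ γ * Real.exp (-C * s)
      ≤ 4 ^ |γ| * (s + 1) ^ |γ| * (a + 1) ^ (2 * γ) * Real.exp (-C * s) := by
        simpa using mul_le_mul_of_nonneg_right hcomp (Real.exp_pos _).le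
    _ ≤ 4 ^ |γ| * (M * Real.exp (C * (s + 1))) * (a + 1) ^ (2 * γ) * Real.exp (-C * s) := by
        gcongr
        exact rpow_le_mul_exp_mul hs (abs_nonneg γ) hC
    _ = 4 ^ |γ| * M * Real.exp C * (a + 1) ^ (2 * γ) := by
        rw [show Real.exp C = Real.exp (C * (s + 1)) * Real.exp (-C * s) by
          rw [← Real.exp_add]; ring_nf]
        ring
end

section
/- Let γ > −1 be fixed. Then there exist constants 0 < c₁ ≤ c₂ (depending only on γ) such that for all 0 ≤ a ≤ b ≤ ∞ (with b = ∞ interpreted as an improper integral), c₁ M ≤ ∫_a^b x^γ e^{−x²} dx ≤ c₂ M, where M = [min(b − a, 1/(a+1))] · [min(b, a+1)]^γ · e^{−a²}. -/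
/-!
Write `δ = 1 / (a + 1)`. On a window `(a, b)` with `b ≤ a + δ` we have `x² ≤ a² + 3`, so the
Gaussian factor is `e^{-a²}` up to a factor `e³`, and `∫_a^b x^γ dx ≍ (b - a) b^γ` by Bernoulli's
inequality applied to `1 - (a / b)^(γ + 1)`. Beyond `a + δ ≥ (a + 1) / 2` the integrand is
dominated by a constant times `(a + 1)^γ e^{-a²} e^{-(a + 1)(x - a) / 2}`, whose integral is
`O(δ (a + 1)^γ e^{-a²})`, so the window `(a, a + δ)` carries the whole tail up to a constant.
Finally `a + δ` and `min b (a + 1)` lie in `[(a + 1) / 2, a + 1]`, so their `γ`-th powers agree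
with `(a + 1)^γ` up to the factor `2^|γ|`.
-/

open MeasureTheory Set Real

lemma one_sub_rpow_bounds {s t : ℝ} (hs : 0 < s) (ht₀ : 0 ≤ t) (ht₁ : t ≤ 1) :
    min 1 s * (1 - t) ≤ 1 - t ^ s ∧ 1 - t ^ s ≤ max 1 s * (1 - t) := by
  have hbern : -1 ≤ t - 1 := by linarith
  rcases le_total s 1 with hs₁ | hs₁
  · have h₁ : t ≤ t ^ s := by
      simpa using rpow_le_rpow_of_exponent_ge' ht₀ ht₁ hs.le hs₁
    have h₂ := rpow_one_add_le_one_add_mul_self hbern hs.le hs₁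
    rw [add_sub_cancel] at h₂
    rw [min_eq_right hs₁, max_eq_left hs₁]
    constructor <;> nlinarith
  · have h₁ : t ^ s ≤ t := by
      simpa using rpow_le_rpow_of_exponent_ge' ht₀ ht₁ zero_le_one hs₁
    have h₂ := one_add_mul_self_le_rpow_one_add hbern hs₁
    rw [add_sub_cancel] at h₂
    rw [min_eq_left hs₁, max_eq_right hs₁]
    constructor <;> nlinarith

lemma rpow_sub_rpow_bounds {s a b : ℝ} (hs : 0 < s) (ha : 0 ≤ a) (hab : a ≤ b) :
    min 1 s * ((b - a) * b ^ (s - 1)) ≤ b ^ s - a ^ s ∧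
      b ^ s - a ^ s ≤ max 1 s * ((b - a) * b ^ (s - 1)) := by
  rcases hab.eq_or_lt with rfl | hab
  · simp
  have hb : 0 < b := ha.trans_lt hab
  obtain ⟨h₁, h₂⟩ := one_sub_rpow_bounds hs (div_nonneg ha hb.le) ((div_le_one hb).2 hab.le)
  have hbs : b ^ s = b * b ^ (s - 1) := by
    rw [← rpow_one_add' hb.le (by linarith), add_sub_cancel]
  have hsplit : b ^ s - a ^ s = b ^ s * (1 - (a / b) ^ s) := by
    rw [div_rpow ha hb.le]; field_simp
  have hsplit' : (b - a) * b ^ (s - 1) = b ^ s * (1 - a / b) := by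
    rw [hbs]; field_simp
  have hbs₀ : 0 < b ^ s := rpow_pos_of_pos hb s
  rw [hsplit, hsplit']
  constructor <;> nlinarith

lemma lintegral_rpow_Ioo {γ a b : ℝ} (hγ : -1 < γ) (ha : 0 ≤ a) (hab : a ≤ b) :
    ∫⁻ x in Ioo a b, ENNReal.ofReal (x ^ γ) =
      ENNReal.ofReal ((b ^ (γ + 1) - a ^ (γ + 1)) / (γ + 1)) := by
  have hint : IntegrableOn (fun x : ℝ ↦ x ^ γ) (Ioo a b) :=
    (intervalIntegral.intervalIntegrable_rpow' hγ).1.mono_set Ioo_subset_Ioc_self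
  rw [← ofReal_integral_eq_lintegral_ofReal hint, ← integral_Ioc_eq_integral_Ioo,
    ← intervalIntegral.integral_of_le hab, integral_rpow (Or.inl hγ)]
  filter_upwards [ae_restrict_mem measurableSet_Ioo] with x hx
  exact rpow_nonneg (ha.trans hx.1.le) γ

lemma lintegral_rpow_Ioo_bounds {γ a b : ℝ} (hγ : -1 < γ) (ha : 0 ≤ a) (hab : a ≤ b) :
    ENNReal.ofReal (min 1 (γ + 1) / (γ + 1) * ((b - a) * b ^ γ)) ≤
        ∫⁻ x in Ioo a b, ENNReal.ofReal (x ^ γ) ∧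
      ∫⁻ x in Ioo a b, ENNReal.ofReal (x ^ γ) ≤
        ENNReal.ofReal (max 1 (γ + 1) / (γ + 1) * ((b - a) * b ^ γ)) := by
  have hs : 0 < γ + 1 := by linarith
  obtain ⟨hlo, hhi⟩ := rpow_sub_rpow_bounds hs ha hab
  rw [add_sub_cancel_right] at hlo hhi
  rw [lintegral_rpow_Ioo hγ ha hab, div_mul_eq_mul_div, div_mul_eq_mul_div]
  exact ⟨ENNReal.ofReal_le_ofReal (div_le_div_of_nonneg_right hlo hs.le),
    ENNReal.ofReal_le_ofReal (div_le_div_of_nonneg_right hhi hs.le)⟩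

section
variable {α : Type*} [MeasurableSpace α] {μ : Measure α} {s : Set α} {f g : α → ℝ} {c : ℝ}

lemma setLIntegral_ofReal_mul_le (hs : MeasurableSet s) (hf : ∀ x ∈ s, 0 ≤ f x)
    (hg : ∀ x ∈ s, g x ≤ c) :
    ∫⁻ x in s, ENNReal.ofReal (f x * g x) ∂μ ≤
      (∫⁻ x in s, ENNReal.ofReal (f x) ∂μ) * ENNReal.ofReal c := by
  rw [← lintegral_mul_const' _ _ ENNReal.ofReal_ne_top]
  refine setLIntegral_mono' hs fun x hx ↦ ?_
  rw [← ENNReal.ofReal_mul (hf x hx)]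
  exact ENNReal.ofReal_le_ofReal (mul_le_mul_of_nonneg_left (hg x hx) (hf x hx))

lemma le_setLIntegral_ofReal_mul (hs : MeasurableSet s) (hf : ∀ x ∈ s, 0 ≤ f x)
    (hg : ∀ x ∈ s, c ≤ g x) :
    (∫⁻ x in s, ENNReal.ofReal (f x) ∂μ) * ENNReal.ofReal c ≤
      ∫⁻ x in s, ENNReal.ofReal (f x * g x) ∂μ := by
  rw [← lintegral_mul_const' _ _ ENNReal.ofReal_ne_top]
  refine setLIntegral_mono' hs fun x hx ↦ ?_
  rw [← ENNReal.ofReal_mul (hf x hx)]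
  exact ENNReal.ofReal_le_ofReal (mul_le_mul_of_nonneg_left (hg x hx) (hf x hx))

end

lemma ofReal_mul_le_ofReal_mul {c c' M : ℝ} (h : c ≤ c') (hM : 0 ≤ M) :
    ENNReal.ofReal (c * M) ≤ ENNReal.ofReal (c' * M) :=
  ENNReal.ofReal_le_ofReal (mul_le_mul_of_nonneg_right h hM)

lemma lintegral_exp_neg_mul_sub_Ioi {k : ℝ} (hk : 0 < k) (a : ℝ) :
    ∫⁻ x in Ioi a, ENNReal.ofReal (exp (-(k * (x - a)))) = ENNReal.ofReal (1 / k) := by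
  have hexp : ∀ x, exp (-(k * (x - a))) = exp (k * a) * exp (-k * x) := fun x ↦ by
    rw [← exp_add]; ring_nf
  have hint : IntegrableOn (fun x ↦ exp (-(k * (x - a)))) (Ioi a) := by
    simp_rw [hexp]
    exact (exp_neg_integrableOn_Ioi a hk).const_mul (exp (k * a))
  rw [← ofReal_integral_eq_lintegral_ofReal hint (.of_forall fun _ ↦ (exp_pos _).le)]
  simp_rw [hexp]
  rw [integral_const_mul, integral_exp_mul_Ioi (by linarith)]
  congr 1
  field_simp
  rw [← exp_add]
  simp

lemma rpow_le_exp_mul_rpow {γ u v c : ℝ} (hu : 0 < u) (hv : 0 < v) (h : |log (u / v)| ≤ c) :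
    u ^ γ ≤ exp (|γ| * c) * v ^ γ := by
  have hratio : (u / v) ^ γ ≤ exp (|γ| * c) := by
    rw [rpow_def_of_pos (div_pos hu hv), exp_le_exp]
    calc log (u / v) * γ ≤ |log (u / v) * γ| := le_abs_self _
      _ = |γ| * |log (u / v)| := by rw [abs_mul, mul_comm]
      _ ≤ |γ| * c := mul_le_mul_of_nonneg_left h (abs_nonneg γ)
  calc u ^ γ = (u / v) ^ γ * v ^ γ := by
        rw [div_rpow hu.le hv.le, div_mul_cancel₀ _ (rpow_pos_of_pos hv γ).ne']
    _ ≤ exp (|γ| * c) * v ^ γ := mul_le_mul_of_nonneg_right hratio (rpow_nonneg hv.le γ)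

lemma rpow_le_two_rpow_abs_mul_rpow {γ u v : ℝ} (hv : 0 < v) (hvu : v ≤ 2 * u) (huv : u ≤ 2 * v) :
    u ^ γ ≤ 2 ^ |γ| * v ^ γ := by
  have hu : 0 < u := by linarith
  have hlog : |log (u / v)| ≤ log 2 := by
    rw [abs_le, ← log_inv, ← one_div]
    constructor
    · exact log_le_log (by norm_num) ((le_div_iff₀ hv).2 (by linarith))
    · exact log_le_log (div_pos hu hv) ((div_le_iff₀ hv).2 (by linarith))
  simpa only [rpow_def_of_pos two_pos, mul_comm (log 2)] using rpow_le_exp_mul_rpow hu hv hlog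

lemma abs_log_div_add_one_le {a x : ℝ} (ha : 0 ≤ a) (hax : a ≤ x) (hx : (a + 1) / 2 ≤ x) :
    |log (x / (a + 1))| ≤ log 2 + (x - a) := by
  have hA : 0 < a + 1 := by linarith
  have hr : 1 / 2 ≤ x / (a + 1) := by rw [le_div_iff₀ hA]; linarith
  have hr₀ : 0 < x / (a + 1) := by linarith
  have hlog2 : 0 ≤ log 2 := log_nonneg one_le_two
  rw [abs_le]
  constructor
  · have : log (1 / 2) ≤ log (x / (a + 1)) := log_le_log (by norm_num) hr
    rw [one_div, log_inv] at this
    linarith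
  · have h₁ := log_le_sub_one_of_pos hr₀
    have h₂ : x / (a + 1) - 1 ≤ x - a := by
      rw [div_sub_one hA.ne', div_le_iff₀ hA]; nlinarith
    linarith

lemma rpow_mul_exp_neg_sq_le {γ a x : ℝ} (ha : 0 ≤ a) (hax : a ≤ x) (hx : (a + 1) / 2 ≤ x) :
    x ^ γ * exp (-x ^ 2) ≤
      exp (|γ| * log 2 + (|γ| + 1 / 2) ^ 2 / 4) * ((a + 1) ^ γ * exp (-a ^ 2)) *
        exp (-((a + 1) / 2 * (x - a))) := by
  have hA : 0 < a + 1 := by linarith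
  have hpow : x ^ γ ≤ exp (|γ| * (log 2 + (x - a))) * (a + 1) ^ γ :=
    rpow_le_exp_mul_rpow (by linarith) hA (abs_log_div_add_one_le ha hax hx)
  have hexp : exp (|γ| * (log 2 + (x - a))) * exp (-x ^ 2) ≤
      exp (|γ| * log 2 + (|γ| + 1 / 2) ^ 2 / 4) * exp (-a ^ 2) *
        exp (-((a + 1) / 2 * (x - a))) := by
    simp only [← exp_add, exp_le_exp]
    nlinarith [sq_nonneg (x - a - (|γ| + 1 / 2) / 2), mul_nonneg ha (sub_nonneg.2 hax)]
  calc x ^ γ * exp (-x ^ 2)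
      ≤ exp (|γ| * (log 2 + (x - a))) * (a + 1) ^ γ * exp (-x ^ 2) :=
        mul_le_mul_of_nonneg_right hpow (exp_pos _).le
    _ = (a + 1) ^ γ * (exp (|γ| * (log 2 + (x - a))) * exp (-x ^ 2)) := by ring
    _ ≤ (a + 1) ^ γ * (exp (|γ| * log 2 + (|γ| + 1 / 2) ^ 2 / 4) * exp (-a ^ 2) *
        exp (-((a + 1) / 2 * (x - a)))) :=
        mul_le_mul_of_nonneg_left hexp (rpow_nonneg hA.le γ)
    _ = _ := by ring

lemma add_one_div_add_one_mem_Icc {a : ℝ} (ha : 0 ≤ a) :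
    a + 1 / (a + 1) ∈ Icc ((a + 1) / 2) (a + 1) := by
  have hA : 0 < a + 1 := by linarith
  have hδ : 1 / (a + 1) ≤ 1 := by rw [div_le_one hA]; linarith
  refine ⟨?_, by linarith⟩
  have : (a + 1) / 2 - 1 / (a + 1) ≤ a := by
    rw [div_sub_div _ _ two_ne_zero hA.ne', div_le_iff₀ (by positivity)]
    nlinarith
  linarith

lemma exists_bounds_lintegral_Ioo_short {γ : ℝ} (hγ : -1 < γ) :
    ∃ d₁ d₂ : ℝ, 0 < d₁ ∧ 0 < d₂ ∧ ∀ a b : ℝ, 0 ≤ a → a ≤ b → b ≤ a + 1 / (a + 1) →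
      ENNReal.ofReal (d₁ * ((b - a) * b ^ γ * exp (-a ^ 2))) ≤
          ∫⁻ x in Ioo a b, ENNReal.ofReal (x ^ γ * exp (-x ^ 2)) ∧
        ∫⁻ x in Ioo a b, ENNReal.ofReal (x ^ γ * exp (-x ^ 2)) ≤
          ENNReal.ofReal (d₂ * ((b - a) * b ^ γ * exp (-a ^ 2))) := by
  have hs : 0 < γ + 1 := by linarith
  refine ⟨min 1 (γ + 1) / (γ + 1) * exp (-3), max 1 (γ + 1) / (γ + 1),
    mul_pos (div_pos (lt_min one_pos hs) hs) (exp_pos _),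
    div_pos (lt_max_of_lt_left one_pos) hs, fun a b ha hab hb ↦ ?_⟩
  obtain ⟨hlo, hhi⟩ := lintegral_rpow_Ioo_bounds hγ ha hab
  have hrpow : ∀ x ∈ Ioo a b, 0 ≤ x ^ γ := fun x hx ↦ rpow_nonneg (ha.trans hx.1.le) γ
  have hexp_le : ∀ x ∈ Ioo a b, exp (-x ^ 2) ≤ exp (-a ^ 2) := fun x hx ↦ by
    rw [exp_le_exp, neg_le_neg_iff]
    exact pow_le_pow_left₀ ha hx.1.le 2
  -- on a window of length `1 / (a + 1)` the square grows by at most `2 a / (a + 1) + 1 ≤ 3`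
  have hexp_ge : ∀ x ∈ Ioo a b, exp (-3) * exp (-a ^ 2) ≤ exp (-x ^ 2) := fun x hx ↦ by
    have hA : 0 < a + 1 := by linarith
    have hδ : a * (1 / (a + 1)) ≤ 1 := by rw [mul_one_div, div_le_one hA]; linarith
    have hδ' : 1 / (a + 1) ≤ 1 := by rw [div_le_one hA]; linarith
    rw [← exp_add, exp_le_exp]
    nlinarith [hx.1, hx.2, mul_nonneg ha (ha.trans hx.1.le)]
  constructor
  · calc ENNReal.ofReal (min 1 (γ + 1) / (γ + 1) * exp (-3) * ((b - a) * b ^ γ * exp (-a ^ 2)))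
        = ENNReal.ofReal (min 1 (γ + 1) / (γ + 1) * ((b - a) * b ^ γ)) *
            ENNReal.ofReal (exp (-3) * exp (-a ^ 2)) := by
          rw [← ENNReal.ofReal_mul' (by positivity)]; ring_nf
      _ ≤ (∫⁻ x in Ioo a b, ENNReal.ofReal (x ^ γ)) * ENNReal.ofReal (exp (-3) * exp (-a ^ 2)) :=
          mul_le_mul_left hlo _
      _ ≤ _ := le_setLIntegral_ofReal_mul measurableSet_Ioo hrpow hexp_ge
  · calc ∫⁻ x in Ioo a b, ENNReal.ofReal (x ^ γ * exp (-x ^ 2))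
        ≤ (∫⁻ x in Ioo a b, ENNReal.ofReal (x ^ γ)) * ENNReal.ofReal (exp (-a ^ 2)) :=
          setLIntegral_ofReal_mul_le measurableSet_Ioo hrpow hexp_le
      _ ≤ ENNReal.ofReal (max 1 (γ + 1) / (γ + 1) * ((b - a) * b ^ γ)) *
            ENNReal.ofReal (exp (-a ^ 2)) := mul_le_mul_left hhi _
      _ = _ := by rw [← ENNReal.ofReal_mul' (exp_pos _).le]; ring_nf

lemma exists_le_lintegral_Ioo_add_one_div {γ : ℝ} (hγ : -1 < γ) :
    ∃ c : ℝ, 0 < c ∧ ∀ a : ℝ, 0 ≤ a →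
      ENNReal.ofReal (c * (1 / (a + 1) * (a + 1) ^ γ * exp (-a ^ 2))) ≤
        ∫⁻ x in Ioo a (a + 1 / (a + 1)), ENNReal.ofReal (x ^ γ * exp (-x ^ 2)) := by
  obtain ⟨d₁, _, hd₁, -, hshort⟩ := exists_bounds_lintegral_Ioo_short hγ
  refine ⟨d₁ / 2 ^ |γ|, by positivity, fun a ha ↦ ?_⟩
  have hA : 0 < a + 1 := by linarith
  obtain ⟨hm₁, hm₂⟩ := add_one_div_add_one_mem_Icc ha
  have hpow : (a + 1) ^ γ ≤ 2 ^ |γ| * (a + 1 / (a + 1)) ^ γ :=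
    rpow_le_two_rpow_abs_mul_rpow (by linarith) (by linarith) (by linarith)
  refine le_trans (ENNReal.ofReal_le_ofReal ?_)
    (hshort a _ ha (le_add_of_nonneg_right (by positivity)) le_rfl).1
  rw [add_sub_cancel_left]
  calc d₁ / 2 ^ |γ| * (1 / (a + 1) * (a + 1) ^ γ * exp (-a ^ 2))
      ≤ d₁ / 2 ^ |γ| * (1 / (a + 1) * (2 ^ |γ| * (a + 1 / (a + 1)) ^ γ) * exp (-a ^ 2)) := by
        gcongr
    _ = d₁ * (1 / (a + 1) * (a + 1 / (a + 1)) ^ γ * exp (-a ^ 2)) := by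
        field_simp

lemma lintegral_Ici_rpow_mul_exp_neg_sq_le {γ a m : ℝ} (ha : 0 ≤ a) (ham : a < m)
    (hm : (a + 1) / 2 ≤ m) :
    ∫⁻ x in Ici m, ENNReal.ofReal (x ^ γ * exp (-x ^ 2)) ≤
      ENNReal.ofReal (2 * exp (|γ| * log 2 + (|γ| + 1 / 2) ^ 2 / 4) *
        (1 / (a + 1) * (a + 1) ^ γ * exp (-a ^ 2))) := by
  have hA : 0 < a + 1 := by linarith
  set L := exp (|γ| * log 2 + (|γ| + 1 / 2) ^ 2 / 4)
  have hLP : 0 ≤ L * ((a + 1) ^ γ * exp (-a ^ 2)) := by positivity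
  calc ∫⁻ x in Ici m, ENNReal.ofReal (x ^ γ * exp (-x ^ 2))
      ≤ ∫⁻ x in Ici m, ENNReal.ofReal (L * ((a + 1) ^ γ * exp (-a ^ 2))) *
          ENNReal.ofReal (exp (-((a + 1) / 2 * (x - a)))) := by
        refine setLIntegral_mono' measurableSet_Ici fun x hx ↦ ?_
        rw [← ENNReal.ofReal_mul hLP]
        exact ENNReal.ofReal_le_ofReal
          (rpow_mul_exp_neg_sq_le ha (ham.le.trans hx) (hm.trans hx))
    _ ≤ ∫⁻ x in Ioi a, ENNReal.ofReal (L * ((a + 1) ^ γ * exp (-a ^ 2))) *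
          ENNReal.ofReal (exp (-((a + 1) / 2 * (x - a)))) :=
        lintegral_mono_set fun x hx ↦ ham.trans_le hx
    _ = _ := by
        rw [lintegral_const_mul' _ _ ENNReal.ofReal_ne_top,
          lintegral_exp_neg_mul_sub_Ioi (by positivity), ← ENNReal.ofReal_mul hLP]
        congr 1
        field_simp

lemma exists_lintegral_Ioi_le {γ : ℝ} (hγ : -1 < γ) :
    ∃ C : ℝ, 0 ≤ C ∧ ∀ a : ℝ, 0 ≤ a →
      ∫⁻ x in Ioi a, ENNReal.ofReal (x ^ γ * exp (-x ^ 2)) ≤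
        ENNReal.ofReal (C * (1 / (a + 1) * (a + 1) ^ γ * exp (-a ^ 2))) := by
  obtain ⟨_, d₂, -, hd₂, hshort⟩ := exists_bounds_lintegral_Ioo_short hγ
  set L := exp (|γ| * log 2 + (|γ| + 1 / 2) ^ 2 / 4)
  refine ⟨d₂ * 2 ^ |γ| + 2 * L, by positivity, fun a ha ↦ ?_⟩
  have hA : 0 < a + 1 := by linarith
  set m := a + 1 / (a + 1)
  obtain ⟨hm₁, hm₂⟩ := add_one_div_add_one_mem_Icc ha
  have ham : a < m := lt_add_of_pos_right a (one_div_pos.2 hA)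
  set N := 1 / (a + 1) * (a + 1) ^ γ * exp (-a ^ 2)
  have hN : 0 ≤ N := by positivity
  have hnear : ∫⁻ x in Ioo a m, ENNReal.ofReal (x ^ γ * exp (-x ^ 2)) ≤
      ENNReal.ofReal (d₂ * 2 ^ |γ| * N) := by
    refine (hshort a m ha ham.le le_rfl).2.trans (ENNReal.ofReal_le_ofReal ?_)
    have hpow : m ^ γ ≤ 2 ^ |γ| * (a + 1) ^ γ :=
      rpow_le_two_rpow_abs_mul_rpow hA (by linarith) (by linarith)
    calc d₂ * ((m - a) * m ^ γ * exp (-a ^ 2))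
        = d₂ * (1 / (a + 1) * m ^ γ * exp (-a ^ 2)) := by simp only [m, add_sub_cancel_left]
      _ ≤ d₂ * (1 / (a + 1) * (2 ^ |γ| * (a + 1) ^ γ) * exp (-a ^ 2)) := by gcongr
      _ = d₂ * 2 ^ |γ| * N := by ring
  calc ∫⁻ x in Ioi a, ENNReal.ofReal (x ^ γ * exp (-x ^ 2))
      = ∫⁻ x in Ioo a m ∪ Ici m, ENNReal.ofReal (x ^ γ * exp (-x ^ 2)) := by
        rw [Ioo_union_Ici_eq_Ioi ham]
    _ ≤ _ := lintegral_union_le _ _ _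
    _ ≤ ENNReal.ofReal (d₂ * 2 ^ |γ| * N) + ENNReal.ofReal (2 * L * N) :=
        add_le_add hnear (lintegral_Ici_rpow_mul_exp_neg_sq_le ha ham hm₁)
    _ = _ := by rw [← ENNReal.ofReal_add (by positivity) (by positivity), add_mul]

lemma exists_bounds_lintegral_Ioo {γ : ℝ} (hγ : -1 < γ) :
    ∃ c₁ c₂ : ℝ, 0 < c₁ ∧ ∀ a b : ℝ, 0 ≤ a → a ≤ b →
      ENNReal.ofReal (c₁ * (min (b - a) (1 / (a + 1)) * (min b (a + 1)) ^ γ * exp (-a ^ 2))) ≤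
          ∫⁻ x in Ioo a b, ENNReal.ofReal (x ^ γ * exp (-x ^ 2)) ∧
        ∫⁻ x in Ioo a b, ENNReal.ofReal (x ^ γ * exp (-x ^ 2)) ≤
          ENNReal.ofReal
            (c₂ * (min (b - a) (1 / (a + 1)) * (min b (a + 1)) ^ γ * exp (-a ^ 2))) := by
  obtain ⟨d₁, d₂, hd₁, -, hshort⟩ := exists_bounds_lintegral_Ioo_short hγ
  obtain ⟨c, hc, hnear⟩ := exists_le_lintegral_Ioo_add_one_div hγ
  obtain ⟨C, hC, htail⟩ := exists_lintegral_Ioi_le hγ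
  refine ⟨min d₁ (c / 2 ^ |γ|), max d₂ (C * 2 ^ |γ|), by positivity, fun a b ha hab ↦ ?_⟩
  have hA : 0 < a + 1 := by linarith
  obtain ⟨hm₁, hm₂⟩ := add_one_div_add_one_mem_Icc ha
  rcases le_or_gt b (a + 1 / (a + 1)) with hb | hb
  · rw [min_eq_left (show b - a ≤ 1 / (a + 1) by linarith), min_eq_left (hb.trans hm₂)]
    have hE : 0 ≤ (b - a) * b ^ γ * exp (-a ^ 2) := by
      have := sub_nonneg.2 hab
      have := rpow_nonneg (ha.trans hab) γ
      positivity
    obtain ⟨hlo, hhi⟩ := hshort a b ha hab hb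
    exact ⟨(ofReal_mul_le_ofReal_mul (min_le_left _ _) hE).trans hlo,
      hhi.trans (ofReal_mul_le_ofReal_mul (le_max_left _ _) hE)⟩
  rw [min_eq_right (show 1 / (a + 1) ≤ b - a by linarith)]
  set w := min b (a + 1)
  have hw₁ : (a + 1) / 2 ≤ w := le_min (by linarith) (by linarith)
  have hw₂ : w ≤ a + 1 := min_le_right _ _
  have hw : 0 ≤ w ^ γ := rpow_nonneg (by linarith) γ
  constructor
  · have hpow : w ^ γ ≤ 2 ^ |γ| * (a + 1) ^ γ :=
      rpow_le_two_rpow_abs_mul_rpow hA (by linarith) (by linarith)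
    calc ENNReal.ofReal (min d₁ (c / 2 ^ |γ|) * (1 / (a + 1) * w ^ γ * exp (-a ^ 2)))
        ≤ ENNReal.ofReal (c * (1 / (a + 1) * (a + 1) ^ γ * exp (-a ^ 2))) := by
          refine ENNReal.ofReal_le_ofReal ?_
          calc min d₁ (c / 2 ^ |γ|) * (1 / (a + 1) * w ^ γ * exp (-a ^ 2))
              ≤ c / 2 ^ |γ| * (1 / (a + 1) * (2 ^ |γ| * (a + 1) ^ γ) * exp (-a ^ 2)) := by
                gcongr; exact min_le_right _ _
            _ = c * (1 / (a + 1) * (a + 1) ^ γ * exp (-a ^ 2)) := by field_simp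
      _ ≤ ∫⁻ x in Ioo a (a + 1 / (a + 1)), ENNReal.ofReal (x ^ γ * exp (-x ^ 2)) := hnear a ha
      _ ≤ ∫⁻ x in Ioo a b, ENNReal.ofReal (x ^ γ * exp (-x ^ 2)) :=
          lintegral_mono_set (Ioo_subset_Ioo_right hb.le)
  · have hpow : (a + 1) ^ γ ≤ 2 ^ |γ| * w ^ γ :=
      rpow_le_two_rpow_abs_mul_rpow (by linarith) (by linarith) (by linarith)
    calc ∫⁻ x in Ioo a b, ENNReal.ofReal (x ^ γ * exp (-x ^ 2))
        ≤ ∫⁻ x in Ioi a, ENNReal.ofReal (x ^ γ * exp (-x ^ 2)) :=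
          lintegral_mono_set Ioo_subset_Ioi_self
      _ ≤ ENNReal.ofReal (C * (1 / (a + 1) * (a + 1) ^ γ * exp (-a ^ 2))) := htail a ha
      _ ≤ _ := by
          refine ENNReal.ofReal_le_ofReal ?_
          calc C * (1 / (a + 1) * (a + 1) ^ γ * exp (-a ^ 2))
              ≤ C * (1 / (a + 1) * (2 ^ |γ| * w ^ γ) * exp (-a ^ 2)) := by gcongr
            _ = C * 2 ^ |γ| * (1 / (a + 1) * w ^ γ * exp (-a ^ 2)) := by ring
            _ ≤ _ := by gcongr; exact le_max_right _ _

/-- For fixed `γ > −1` there exist `0 < c₁ ≤ c₂` such that for all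
`0 ≤ a ≤ b ≤ ∞`,
`c₁ M ≤ ∫_a^b x^γ e^{−x²} dx ≤ c₂ M`, where
`M = min(b − a, 1/(a+1)) · (min(b, a+1))^γ · e^{−a²}`
(for `b = ∞`, `M = (1/(a+1)) (a+1)^γ e^{−a²}`). -/
theorem stmt2 (γ : ℝ) (hγ : -1 < γ) :
    ∃ c₁ c₂ : ℝ, 0 < c₁ ∧ c₁ ≤ c₂ ∧
      (∀ a b : ℝ, 0 ≤ a → a ≤ b →
        ENNReal.ofReal
            (c₁ * (min (b - a) (1 / (a + 1)) * (min b (a + 1)) ^ γ * Real.exp (-a ^ 2))) ≤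
          ∫⁻ x in Set.Ioo a b, ENNReal.ofReal (x ^ γ * Real.exp (-x ^ 2)) ∧
        ∫⁻ x in Set.Ioo a b, ENNReal.ofReal (x ^ γ * Real.exp (-x ^ 2)) ≤
          ENNReal.ofReal
            (c₂ * (min (b - a) (1 / (a + 1)) * (min b (a + 1)) ^ γ * Real.exp (-a ^ 2)))) ∧
      (∀ a : ℝ, 0 ≤ a →
        ENNReal.ofReal (c₁ * (1 / (a + 1) * (a + 1) ^ γ * Real.exp (-a ^ 2))) ≤
          ∫⁻ x in Set.Ioi a, ENNReal.ofReal (x ^ γ * Real.exp (-x ^ 2)) ∧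
        ∫⁻ x in Set.Ioi a, ENNReal.ofReal (x ^ γ * Real.exp (-x ^ 2)) ≤
          ENNReal.ofReal (c₂ * (1 / (a + 1) * (a + 1) ^ γ * Real.exp (-a ^ 2)))) := by
  obtain ⟨c₁, c₂, hc₁, hIoo⟩ := exists_bounds_lintegral_Ioo hγ
  obtain ⟨c, hc, hnear⟩ := exists_le_lintegral_Ioo_add_one_div hγ
  obtain ⟨C, -, htail⟩ := exists_lintegral_Ioi_le hγ
  refine ⟨min c₁ c, max (max c₂ C) (min c₁ c), lt_min hc₁ hc, le_max_right _ _,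
    fun a b ha hab ↦ ?_, fun a ha ↦ ?_⟩
  · have hM : 0 ≤ min (b - a) (1 / (a + 1)) * (min b (a + 1)) ^ γ * exp (-a ^ 2) := by
      have := le_min (sub_nonneg.2 hab) (by positivity : 0 ≤ 1 / (a + 1))
      have := rpow_nonneg (le_min (ha.trans hab) (by linarith : 0 ≤ a + 1)) γ
      positivity
    obtain ⟨hlo, hhi⟩ := hIoo a b ha hab
    exact ⟨(ofReal_mul_le_ofReal_mul (min_le_left _ _) hM).trans hlo,
      hhi.trans (ofReal_mul_le_ofReal_mul ((le_max_left _ _).trans (le_max_left _ _)) hM)⟩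
  · have hN : 0 ≤ 1 / (a + 1) * (a + 1) ^ γ * exp (-a ^ 2) := by
      have := rpow_nonneg (by linarith : 0 ≤ a + 1) γ
      positivity
    exact ⟨(ofReal_mul_le_ofReal_mul (min_le_right _ _) hN).trans
        ((hnear a ha).trans (lintegral_mono_set Ioo_subset_Ioi_self)),
      (htail a ha).trans
        (ofReal_mul_le_ofReal_mul ((le_max_right _ _).trans (le_max_left _ _)) hN)⟩
end

section
/- Let d ≥ 1 and α ∈ (−1,∞)^d. Then there is a constant C (depending only on d and α) such that for all s ∈ (0,1), all x ∈ (0,∞)^d and all y ∈ (0,∞)^d with |y − x| ≥ m(x), K_s^α(x,y) ≤ C e^{|x|²} · min( (|x|θ)^{−d} ∏_{i=1}^d (x_i + |x|θ)^{−2α_i−1} , (|x|+1)^d ∏_{i=1}^d (x_i + 1/(|x|+1))^{−2α_i−1} ), where θ = θ(x,y) and the first expression in the minimum is interpreted as +∞ when |x|θ = 0. -/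
/-! With `β i = -(2 α i + 1) ≤ 1` and `w(t) = t^{-d} ∏ (x i + t)^{β i}`, the kernel is
`K = w(√s) e^{|x|² - |W|²/(8s)}` for `W = (1+s)x - (1-s)y`. Comparing coordinatewise,
`w(√s) ≤ (1 + t/√s)^N w(t) ≤ e^{8N²} e^{t²/(32s)} w(t)` for every `t > 0`, so
`K ≤ e^{8N²+1} e^{|x|²} w(t)` as soon as `t² ≤ 4|W|² + 32s`. Both terms of the minimum are
such `w(t)`. For `t = |x|θ`: `W` is `1 + s` times `x` minus a multiple of `y`, and the distance
from `x` to the line `ℝy` is `|x| sin θ ≥ 2|x|θ/π`. For `t = m(x)`: either `m² ≤ 8s`, or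
`W = (1-s)(x-y) + 2sx` has norm at least `m/2`. -/

open MeasureTheory

/-- The Euclidean norm of `x ∈ ℝ^d`. -/
noncomputable def enr (d : ℕ) (x : Fin d → ℝ) : ℝ :=
  Real.sqrt (∑ i, x i ^ 2)

/-- The angle `θ(x,y) = arccos(⟨x,y⟩/(|x||y|))` between `x` and `y`. -/
noncomputable def theta (d : ℕ) (x y : Fin d → ℝ) : ℝ :=
  Real.arccos ((∑ i, x i * y i) / (enr d x * enr d y))

/-- The kernel
`K_s^α(x,y) = s^{−d/2} (∏ (x_i + √s)^{−2α_i−1}) exp(|x|² − |(1+s)x − (1−s)y|²/(8s))`. -/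
noncomputable def Kker (d : ℕ) (α : Fin d → ℝ) (s : ℝ) (x y : Fin d → ℝ) : ℝ :=
  s ^ (-(d : ℝ) / 2) * (∏ i, (x i + Real.sqrt s) ^ (-(2 * α i + 1))) *
    Real.exp ((∑ i, x i ^ 2) - (∑ i, ((1 + s) * x i - (1 - s) * y i) ^ 2) / (8 * s))

open Real Finset InnerProductGeometry

lemma div_mul_add_rpow_le_of_nonneg {a b c β : ℝ} (ha : 0 ≤ a) (hb : 0 < b) (hc : 0 < c)
    (hβ₀ : 0 ≤ β) (hβ₁ : β ≤ 1) :
    c / b * (a + b) ^ β ≤ (1 + c / b) * (a + c) ^ β := by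
  set r := c / b
  have hr : 0 < r := by positivity
  have hrb : r * b = c := div_mul_cancel₀ c hb.ne'
  have hmono : r * (a + b) ≤ (1 + r) * (a + c) := by nlinarith [mul_pos hr hc]
  calc r * (a + b) ^ β = r ^ (1 - β) * (r * (a + b)) ^ β := by
        rw [mul_rpow hr.le (by positivity), ← mul_assoc, ← rpow_add hr, sub_add_cancel, rpow_one]
    _ ≤ (1 + r) ^ (1 - β) * ((1 + r) * (a + c)) ^ β := by gcongr; linarith
    _ = (1 + r) * (a + c) ^ β := by
        rw [mul_rpow (by positivity) (by positivity), ← mul_assoc, ← rpow_add (by positivity),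
          sub_add_cancel, rpow_one]

lemma div_mul_add_rpow_le_of_nonpos {a b c β : ℝ} (ha : 0 ≤ a) (hb : 0 < b) (hc : 0 < c)
    (hβ : β ≤ 0) :
    c / b * (a + b) ^ β ≤ (1 + c / b) ^ (1 - β) * (a + c) ^ β := by
  set r := c / b
  have hr : 0 < r := by positivity
  have hrb : r * b = c := div_mul_cancel₀ c hb.ne'
  have hmono : (a + c) / (1 + r) ≤ a + b := by
    rw [div_le_iff₀ (by positivity)]; nlinarith [mul_nonneg hr.le ha]
  calc r * (a + b) ^ β ≤ (1 + r) * ((a + c) / (1 + r)) ^ β := by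
        gcongr ?_ * ?_
        · linarith
        · exact rpow_le_rpow_of_nonpos (by positivity) hmono hβ
    _ = (1 + r) ^ (1 - β) * (a + c) ^ β := by
        rw [div_rpow (by positivity) (by positivity), rpow_sub (by positivity), rpow_one]
        ring

lemma inv_mul_add_rpow_le {a b c β : ℝ} (ha : 0 ≤ a) (hb : 0 < b) (hc : 0 < c) (hβ : β ≤ 1) :
    b⁻¹ * (a + b) ^ β ≤ (1 + c / b) ^ (1 + |β|) * (c⁻¹ * (a + c) ^ β) := by
  have hr : 1 ≤ 1 + c / b := le_add_of_nonneg_right (by positivity)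
  have key : c / b * (a + b) ^ β ≤ (1 + c / b) ^ (1 + |β|) * (a + c) ^ β := by
    rcases le_total 0 β with hβ₀ | hβ₀
    · calc c / b * (a + b) ^ β ≤ (1 + c / b) * (a + c) ^ β :=
            div_mul_add_rpow_le_of_nonneg ha hb hc hβ₀ hβ
        _ ≤ _ := by
            gcongr
            exact self_le_rpow_of_one_le hr (by linarith [abs_nonneg β])
    · calc c / b * (a + b) ^ β ≤ (1 + c / b) ^ (1 - β) * (a + c) ^ β :=
            div_mul_add_rpow_le_of_nonpos ha hb hc hβ₀
        _ = _ := by rw [abs_of_nonpos hβ₀, sub_eq_add_neg]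
  calc b⁻¹ * (a + b) ^ β = c⁻¹ * (c / b * (a + b) ^ β) := by field_simp
    _ ≤ c⁻¹ * ((1 + c / b) ^ (1 + |β|) * (a + c) ^ β) := by gcongr
    _ = _ := by ring

noncomputable def weight {d : ℕ} (α x : Fin d → ℝ) (t : ℝ) : ℝ :=
  t ^ (-(d : ℝ)) * ∏ i, (x i + t) ^ (-(2 * α i + 1))

section weight

variable {d : ℕ} {α x : Fin d → ℝ}

lemma weight_nonneg (hx : ∀ i, 0 ≤ x i) {t : ℝ} (ht : 0 ≤ t) : 0 ≤ weight α x t :=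
  mul_nonneg (rpow_nonneg ht _) (prod_nonneg fun i _ => rpow_nonneg (add_nonneg (hx i) ht) _)

lemma weight_eq_prod {t : ℝ} (ht : 0 ≤ t) :
    weight α x t = ∏ i, t⁻¹ * (x i + t) ^ (-(2 * α i + 1)) := by
  rw [weight, prod_mul_distrib, prod_const, card_univ, Fintype.card_fin, rpow_neg ht,
    rpow_natCast, inv_pow]

lemma weight_le_one_add_div_rpow_mul (hα : ∀ i, -1 ≤ α i) (hx : ∀ i, 0 ≤ x i) {b c : ℝ}
    (hb : 0 < b) (hc : 0 < c) :
    weight α x b ≤ (1 + c / b) ^ (∑ i, (1 + |2 * α i + 1|)) * weight α x c := by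
  rw [weight_eq_prod hb.le, weight_eq_prod hc.le, rpow_sum_of_pos (by positivity),
    ← prod_mul_distrib]
  refine prod_le_prod (fun i _ => by have := hx i; positivity) fun i _ => ?_
  rw [← abs_neg]
  exact inv_mul_add_rpow_le (hx i) hb hc (by linarith [hα i])

lemma weight_one_div {r : ℝ} (hr : 0 < r) :
    weight α x (1 / r) = r ^ d * ∏ i, (x i + 1 / r) ^ (-(2 * α i + 1)) := by
  rw [weight, one_div, inv_rpow hr.le, rpow_neg hr.le, inv_inv, rpow_natCast]

end weight

lemma one_add_rpow_le_exp {ρ N : ℝ} (hρ : 0 ≤ ρ) (hN : 0 ≤ N) :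
    (1 + ρ) ^ N ≤ exp (8 * N ^ 2 + ρ ^ 2 / 32) :=
  calc (1 + ρ) ^ N ≤ exp ρ ^ N := by gcongr; linarith [add_one_le_exp ρ]
    _ = exp (ρ * N) := (exp_mul ρ N).symm
    _ ≤ exp (8 * N ^ 2 + ρ ^ 2 / 32) := by gcongr; nlinarith [sq_nonneg (ρ - 16 * N)]

section euclidean

variable {d : ℕ}

lemma sum_sq_eq_norm_toLp_sq (x : Fin d → ℝ) :
    ∑ i, x i ^ 2 = ‖(WithLp.toLp 2 x : EuclideanSpace ℝ (Fin d))‖ ^ 2 := by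
  simp only [EuclideanSpace.norm_eq, norm_eq_abs, sq_abs]
  rw [sq_sqrt (by positivity)]

lemma enr_eq_norm_toLp (x : Fin d → ℝ) :
    enr d x = ‖(WithLp.toLp 2 x : EuclideanSpace ℝ (Fin d))‖ := by
  simp [enr, EuclideanSpace.norm_eq, sq_abs]

lemma theta_eq_angle_toLp (x y : Fin d → ℝ) :
    theta d x y = angle (WithLp.toLp 2 x : EuclideanSpace ℝ (Fin d)) (WithLp.toLp 2 y) := by
  simp [theta, angle, enr_eq_norm_toLp, PiLp.inner_apply, mul_comm]

lemma inner_toLp_nonneg {x y : Fin d → ℝ} (hx : ∀ i, 0 ≤ x i) (hy : ∀ i, 0 ≤ y i) :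
    0 ≤ inner ℝ (WithLp.toLp 2 x : EuclideanSpace ℝ (Fin d)) (WithLp.toLp 2 y) := by
  simp only [PiLp.inner_apply, Real.inner_apply]
  exact sum_nonneg fun i _ => mul_nonneg (hx i) (hy i)

lemma Kker_eq_weight_mul_exp {α : Fin d → ℝ} {s : ℝ} (hs : 0 < s) (x y : Fin d → ℝ) :
    Kker d α s x y = weight α x (√s) * exp (‖(WithLp.toLp 2 x : EuclideanSpace ℝ (Fin d))‖ ^ 2 -
      ‖(1 + s) • WithLp.toLp 2 x - (1 - s) • (WithLp.toLp 2 y : EuclideanSpace ℝ (Fin d))‖ ^ 2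
        / (8 * s)) := by
  have hpow : s ^ (-(d : ℝ) / 2) = √s ^ (-(d : ℝ)) := by
    rw [sqrt_eq_rpow, ← rpow_mul hs.le]; ring_nf
  rw [Kker, weight, hpow, ← sum_sq_eq_norm_toLp_sq, ← WithLp.toLp_smul, ← WithLp.toLp_smul,
    ← WithLp.toLp_sub, ← sum_sq_eq_norm_toLp_sq]
  rfl

end euclidean

section geometry

variable {E : Type*}

lemma norm_mul_sin_angle_le_norm_sub_smul [NormedAddCommGroup E] [InnerProductSpace ℝ E]
    (x y : E) (r : ℝ) : ‖x‖ * sin (angle x y) ≤ ‖x - r • y‖ := by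
  have hsq : ‖x - r • y‖ ^ 2 =
      (‖x‖ * cos (angle x y) - r * ‖y‖) ^ 2 + (‖x‖ * sin (angle x y)) ^ 2 := by
    rw [@norm_sub_sq_real, inner_smul_right, norm_smul, ← cos_angle_mul_norm_mul_norm,
      norm_eq_abs, mul_pow, sq_abs]
    linear_combination (-‖x‖ ^ 2) * sin_sq_add_cos_sq (angle x y)
  have hsin : 0 ≤ ‖x‖ * sin (angle x y) := mul_nonneg (norm_nonneg x) (sin_angle_nonneg x y)
  exact (pow_le_pow_iff_left₀ hsin (norm_nonneg _) two_ne_zero).mp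
    (by rw [hsq]; nlinarith)

lemma norm_mul_angle_le_two_mul_norm_smul_sub_smul [NormedAddCommGroup E]
    [InnerProductSpace ℝ E] {x y : E} {s : ℝ} (hs : 0 ≤ s) (hxy : 0 ≤ inner ℝ x y) :
    ‖x‖ * angle x y ≤ 2 * ‖(1 + s) • x - (1 - s) • y‖ := by
  have hθ : angle x y ≤ π / 2 := arccos_le_pi_div_two.mpr (div_nonneg hxy (by positivity))
  have hjordan : angle x y ≤ π / 2 * sin (angle x y) := by
    have := mul_le_sin (angle_nonneg x y) hθ
    rw [div_mul_eq_mul_div, div_le_iff₀ pi_pos] at this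
    linarith
  have hW : (1 + s) • x - (1 - s) • y = (1 + s) • (x - ((1 - s) / (1 + s)) • y) := by
    rw [smul_sub, smul_smul, mul_div_cancel₀ _ (by positivity)]
  have hdist := norm_mul_sin_angle_le_norm_sub_smul x y ((1 - s) / (1 + s))
  rw [hW, norm_smul, norm_of_nonneg (by positivity)]
  calc ‖x‖ * angle x y ≤ π / 2 * (‖x‖ * sin (angle x y)) := by
        nlinarith [norm_nonneg x]
    _ ≤ 2 * ‖x - ((1 - s) / (1 + s)) • y‖ :=
        mul_le_mul (by linarith [pi_le_four]) hdist
          (mul_nonneg (norm_nonneg x) (sin_angle_nonneg x y)) zero_le_two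
    _ ≤ _ := by
        gcongr
        exact le_mul_of_one_le_left (norm_nonneg _) (by linarith)

lemma sq_le_four_mul_norm_smul_sub_smul_sq_add [SeminormedAddCommGroup E] [NormedSpace ℝ E]
    {x y : E} {s m : ℝ} (hs₀ : 0 ≤ s) (hs₁ : s ≤ 1) (hm : 0 ≤ m) (hmx : m * (‖x‖ + 1) ≤ 1)
    (hxy : m ≤ ‖y - x‖) :
    m ^ 2 ≤ 4 * ‖(1 + s) • x - (1 - s) • y‖ ^ 2 + 8 * s := by
  by_cases hsm : m ^ 2 ≤ 8 * s
  · nlinarith [norm_nonneg ((1 + s) • x - (1 - s) • y)]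
  have hm₁ : m ≤ 1 := by nlinarith [norm_nonneg x]
  have hsx : 2 * s * ‖x‖ ≤ m / 4 := by nlinarith [norm_nonneg x]
  have hW : (1 - s) • (x - y) = ((1 + s) • x - (1 - s) • y) - (2 * s) • x := by module
  have htri := norm_sub_le ((1 + s) • x - (1 - s) • y) ((2 * s) • x)
  rw [← hW, norm_smul, norm_smul, norm_of_nonneg (by linarith), norm_of_nonneg (by linarith),
    norm_sub_rev] at htri
  have hfar : m / 2 ≤ ‖(1 + s) • x - (1 - s) • y‖ := by
    nlinarith [mul_le_mul_of_nonneg_left hxy (by linarith : (0 : ℝ) ≤ 1 - s)]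
  nlinarith

end geometry

section kernel

variable {d : ℕ} {α x : Fin d → ℝ}

lemma Kker_le_mul_weight (hα : ∀ i, -1 ≤ α i) (hx : ∀ i, 0 ≤ x i) {y : Fin d → ℝ} {s t : ℝ}
    (hs : 0 < s) (ht : 0 < t)
    (hst : t ^ 2 ≤ 4 * ‖(1 + s) • WithLp.toLp 2 x -
      (1 - s) • (WithLp.toLp 2 y : EuclideanSpace ℝ (Fin d))‖ ^ 2 + 32 * s) :
    Kker d α s x y ≤ exp (8 * (∑ i, (1 + |2 * α i + 1|)) ^ 2 + 1) *
      exp (‖(WithLp.toLp 2 x : EuclideanSpace ℝ (Fin d))‖ ^ 2) * weight α x t := by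
  set N := ∑ i, (1 + |2 * α i + 1|)
  set X := ‖(WithLp.toLp 2 x : EuclideanSpace ℝ (Fin d))‖
  set W := ‖(1 + s) • WithLp.toLp 2 x - (1 - s) • (WithLp.toLp 2 y : EuclideanSpace ℝ (Fin d))‖
  have hN : 0 ≤ N := sum_nonneg fun i _ => by positivity
  have hwt := weight_nonneg (α := α) hx ht.le
  -- the loss `exp (t² / (32 s))` in trading `√s` for `t` is paid for by the Gaussian factor
  have hgauss : t ^ 2 / (32 * s) ≤ W ^ 2 / (8 * s) + 1 := by
    rw [div_add_one (by positivity), div_le_div_iff₀ (by positivity) (by positivity)]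
    nlinarith
  rw [Kker_eq_weight_mul_exp hs]
  calc weight α x √s * exp (X ^ 2 - W ^ 2 / (8 * s))
      ≤ (1 + t / √s) ^ N * weight α x t * exp (X ^ 2 - W ^ 2 / (8 * s)) := by
        gcongr
        exact weight_le_one_add_div_rpow_mul hα hx (sqrt_pos.mpr hs) ht
    _ ≤ exp (8 * N ^ 2 + (t / √s) ^ 2 / 32) * weight α x t * exp (X ^ 2 - W ^ 2 / (8 * s)) := by
        gcongr
        exact one_add_rpow_le_exp (by positivity) hN
    _ = exp (8 * N ^ 2 + X ^ 2 + (t ^ 2 / (32 * s) - W ^ 2 / (8 * s))) * weight α x t := by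
        rw [div_pow, sq_sqrt hs.le, mul_right_comm, ← exp_add]
        ring_nf
    _ ≤ exp (8 * N ^ 2 + X ^ 2 + 1) * weight α x t := by gcongr; linarith
    _ = exp (8 * N ^ 2 + 1) * exp (X ^ 2) * weight α x t := by rw [← exp_add]; ring_nf

lemma ofReal_rpow_mul_prod_eq_ofReal_weight (hx : ∀ i, 0 ≤ x i) {t : ℝ} (ht : 0 < t) :
    ENNReal.ofReal t ^ (-(d : ℝ)) * ∏ i, ENNReal.ofReal (x i + t) ^ (-(2 * α i + 1)) =
      ENNReal.ofReal (weight α x t) := by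
  have hxt : ∀ i, 0 < x i + t := fun i => add_pos_of_nonneg_of_pos (hx i) ht
  rw [weight, ENNReal.ofReal_mul (rpow_nonneg ht.le _), ENNReal.ofReal_rpow_of_pos ht,
    ENNReal.ofReal_prod_of_nonneg fun i _ => rpow_nonneg (hxt i).le _]
  simp only [ENNReal.ofReal_rpow_of_pos (hxt _)]

lemma ofReal_zero_rpow_mul_prod_eq_top (hd : 1 ≤ d) (hx : ∀ i, 0 < x i) :
    ENNReal.ofReal 0 ^ (-(d : ℝ)) * ∏ i, ENNReal.ofReal (x i + 0) ^ (-(2 * α i + 1)) = ⊤ := by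
  have hprod : ∏ i, ENNReal.ofReal (x i + 0) ^ (-(2 * α i + 1)) ≠ 0 :=
    prod_ne_zero_iff.mpr fun i _ =>
      (ENNReal.rpow_pos (by simpa using hx i) ENNReal.ofReal_ne_top).ne'
  rw [ENNReal.ofReal_zero, ENNReal.zero_rpow_of_neg (by simp; omega), ENNReal.top_mul hprod]

end kernel

/-- For `d ≥ 1`, `α ∈ (−1,∞)^d`, there is `C` such that for all `s ∈ (0,1)`,
`x ∈ (0,∞)^d` and `y ∈ (0,∞)^d` with `|y − x| ≥ m(x) = 1/(|x|+1)`,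
`K_s^α(x,y) ≤ C e^{|x|²} min((|x|θ)^{−d} ∏ (x_i + |x|θ)^{−2α_i−1},
(|x|+1)^d ∏ (x_i + 1/(|x|+1))^{−2α_i−1})`, the first term of the minimum being `+∞`
when `|x|θ = 0` (which is realized here via `ℝ≥0∞`-valued powers, since `0^r = ∞` in
`ℝ≥0∞` for negative real `r`). -/
theorem stmt7 (d : ℕ) (hd : 1 ≤ d) (α : Fin d → ℝ) (hα : ∀ i, -1 < α i) :
    ∃ C : ℝ, 0 < C ∧ ∀ s ∈ Set.Ioo (0 : ℝ) 1, ∀ x y : Fin d → ℝ,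
      (∀ i, 0 < x i) → (∀ i, 0 < y i) →
      1 / (enr d x + 1) ≤ enr d (fun i => y i - x i) →
      ENNReal.ofReal (Kker d α s x y) ≤
        ENNReal.ofReal C * ENNReal.ofReal (Real.exp (enr d x ^ 2)) *
          min
            ((ENNReal.ofReal (enr d x * theta d x y)) ^ (-(d : ℝ)) *
              ∏ i, (ENNReal.ofReal (x i + enr d x * theta d x y)) ^ (-(2 * α i + 1)))
            (ENNReal.ofReal ((enr d x + 1) ^ d *
              ∏ i, (x i + 1 / (enr d x + 1)) ^ (-(2 * α i + 1)))) := by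
  have hα' : ∀ i, -1 ≤ α i := fun i => (hα i).le
  refine ⟨exp (8 * (∑ i, (1 + |2 * α i + 1|)) ^ 2 + 1), exp_pos _, ?_⟩
  rintro s ⟨hs₀, hs₁⟩ x y hx hy hm
  have hx₀ : ∀ i, 0 ≤ x i := fun i => (hx i).le
  simp only [enr_eq_norm_toLp, theta_eq_angle_toLp] at hm ⊢
  set X : EuclideanSpace ℝ (Fin d) := WithLp.toLp 2 x
  set Y : EuclideanSpace ℝ (Fin d) := WithLp.toLp 2 y
  have hC : ENNReal.ofReal (exp (8 * (∑ i, (1 + |2 * α i + 1|)) ^ 2 + 1)) *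
      ENNReal.ofReal (exp (‖X‖ ^ 2)) ≠ 0 := by simp [exp_pos]
  rw [mul_min]
  refine le_min ?_ ?_
  · rcases (mul_nonneg (norm_nonneg X) (angle_nonneg X Y)).eq_or_lt with hT | hT
    · rw [← hT, ofReal_zero_rpow_mul_prod_eq_top hd hx, ENNReal.mul_top hC]
      exact le_top
    have hangle := norm_mul_angle_le_two_mul_norm_smul_sub_smul hs₀.le
      (inner_toLp_nonneg hx₀ fun i => (hy i).le)
    rw [ofReal_rpow_mul_prod_eq_ofReal_weight hx₀ hT, ← ENNReal.ofReal_mul (exp_pos _).le,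
      ← ENNReal.ofReal_mul (by positivity)]
    exact ENNReal.ofReal_le_ofReal (Kker_le_mul_weight hα' hx₀ hs₀ hT (by nlinarith))
  · have hm' : 1 / (‖X‖ + 1) ≤ ‖Y - X‖ := by rwa [← WithLp.toLp_sub]
    have hfar := sq_le_four_mul_norm_smul_sub_smul_sq_add hs₀.le hs₁.le (by positivity)
      (div_mul_cancel₀ (1 : ℝ) (by positivity : ‖X‖ + 1 ≠ 0)).le hm'
    rw [← weight_one_div (by positivity), ← ENNReal.ofReal_mul (exp_pos _).le,
      ← ENNReal.ofReal_mul (by positivity)]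
    exact ENNReal.ofReal_le_ofReal (Kker_le_mul_weight hα' hx₀ hs₀ (by positivity) (by linarith))
end
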